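/- arXiv:1709.02840 — 2 statements merged into one kernel-verified Lean document; each statement's English description precedes it below -/
import Mathlib

section
/- (Multi-sample ELBO) For i.i.d. samples z₁,...,z_K drawn from q, the expectation E[ln((1/K) Σ_{k=1}^K p(x,z_k|θ)/q(z_k))] is at most ln p(x|θ). -/
/-- Multi-sample ELBO: the expectation over K i.i.d. samples from q of
ln((1/K) Σ_k p(x,z_k|θ)/q(z_k)) is at most ln p(x|θ). -/
theorem multisample_elbo {Z : Type*} [Fintype Z] (q p : Z → ℝ) (K : ℕ) (hK : 0 < K)
    (hq : ∀ z, 0 < q z) (hq1 : ∑ z, q z = 1)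
    (hp : ∀ z, 0 < p z) :
    (∑ f : Fin K → Z, (∏ k, q (f k)) *
        Real.log ((1 / (K : ℝ)) * ∑ k, p (f k) / q (f k)))
      ≤ Real.log (∑ z, p z) := by
  classical
  haveI : Nonempty (Fin K) := ⟨⟨0, hK⟩⟩
  set w : (Fin K → Z) → ℝ := fun f => ∏ k, q (f k) with hw_def
  set g : (Fin K → Z) → ℝ := fun f => (1 / (K : ℝ)) * ∑ k, p (f k) / q (f k) with hg_def
  have hw : ∀ f, 0 ≤ w f := fun f => Finset.prod_nonneg fun k _ => (hq _).le
  have hwsum : ∑ f : Fin K → Z, w f = 1 := by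
    have h := (Finset.prod_univ_sum (fun _ : Fin K => (Finset.univ : Finset Z))
      (fun _ z => q z)).symm
    rw [Fintype.piFinset_univ] at h
    rw [hw_def]; simp only
    rw [h, hq1, Finset.prod_const_one]
  have key : ∀ k : Fin K, ∑ f : Fin K → Z, (∏ j, q (f j)) * (p (f k) / q (f k))
      = ∑ z, p z := by
    intro k
    have h1 : ∀ f : Fin K → Z, (∏ j, q (f j)) * (p (f k) / q (f k))
        = ∏ j, (if j = k then p (f j) else q (f j)) := by
      intro f
      rw [← Finset.mul_prod_erase Finset.univ _ (Finset.mem_univ k),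
          ← Finset.mul_prod_erase Finset.univ
            (fun j => if j = k then p (f j) else q (f j)) (Finset.mem_univ k)]
      have h2 : ∏ j ∈ Finset.univ.erase k, (if j = k then p (f j) else q (f j))
          = ∏ j ∈ Finset.univ.erase k, q (f j) :=
        Finset.prod_congr rfl fun j hj => if_neg (Finset.mem_erase.mp hj).1
      rw [h2, if_pos rfl]
      have := (hq (f k)).ne'
      field_simp
    calc ∑ f : Fin K → Z, (∏ j, q (f j)) * (p (f k) / q (f k))
        = ∑ f : Fin K → Z, ∏ j, (if j = k then p (f j) else q (f j)) :=
          Finset.sum_congr rfl fun f _ => h1 f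
      _ = ∏ j : Fin K, ∑ z, (if j = k then p z else q z) := by
          have h := (Finset.prod_univ_sum (fun _ : Fin K => (Finset.univ : Finset Z))
            (fun j z => if j = k then p z else q z)).symm
          rw [Fintype.piFinset_univ] at h
          rw [← h]
      _ = ∑ z, p z := by
          rw [← Finset.mul_prod_erase Finset.univ _ (Finset.mem_univ k)]
          have h3 : ∏ j ∈ Finset.univ.erase k, (∑ z, if j = k then p z else q z)
              = ∏ j ∈ Finset.univ.erase k, (∑ z, q z) :=
            Finset.prod_congr rfl fun j hj =>
              Finset.sum_congr rfl fun z _ => if_neg (Finset.mem_erase.mp hj).1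
          rw [h3]
          simp [hq1]
  have hfg : ∀ f : Fin K → Z, w f * g f
      = ∑ k, (1 / (K : ℝ)) * ((∏ j, q (f j)) * (p (f k) / q (f k))) := by
    intro f
    rw [hw_def, hg_def]; simp only
    rw [Finset.mul_sum, Finset.mul_sum]
    exact Finset.sum_congr rfl fun k _ => by ring
  have hmean : ∑ f : Fin K → Z, w f * g f = ∑ z, p z := by
    calc ∑ f : Fin K → Z, w f * g f
        = ∑ f : Fin K → Z, ∑ k, (1 / (K : ℝ)) * ((∏ j, q (f j)) * (p (f k) / q (f k))) :=
          Finset.sum_congr rfl fun f _ => hfg f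
      _ = ∑ k : Fin K, ∑ f : Fin K → Z,
            (1 / (K : ℝ)) * ((∏ j, q (f j)) * (p (f k) / q (f k))) := Finset.sum_comm
      _ = ∑ k : Fin K, (1 / (K : ℝ)) * ∑ f : Fin K → Z,
            (∏ j, q (f j)) * (p (f k) / q (f k)) :=
          Finset.sum_congr rfl fun k _ => (Finset.mul_sum _ _ _).symm
      _ = ∑ k : Fin K, (1 / (K : ℝ)) * ∑ z, p z :=
          Finset.sum_congr rfl fun k _ => by rw [key k]
      _ = ∑ z, p z := by
          rw [Finset.sum_const, Finset.card_univ, Fintype.card_fin, nsmul_eq_mul]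
          have : (K : ℝ) ≠ 0 := Nat.cast_ne_zero.mpr hK.ne'
          field_simp
  have hg_pos : ∀ f : Fin K → Z, g f ∈ Set.Ioi (0 : ℝ) := by
    intro f
    have hs : (0:ℝ) < ∑ k, p (f k) / q (f k) :=
      Finset.sum_pos (fun k _ => div_pos (hp _) (hq _)) Finset.univ_nonempty
    have : (0:ℝ) < 1 / (K : ℝ) := by positivity
    exact mul_pos this hs
  have jensen := (strictConcaveOn_log_Ioi.concaveOn).le_map_sum
    (t := (Finset.univ : Finset (Fin K → Z))) (p := g) (w := w)
    (fun f _ => hw f) hwsum (fun f _ => hg_pos f)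
  simp only [smul_eq_mul] at jensen
  calc ∑ f : Fin K → Z, w f * Real.log (g f) ≤ Real.log (∑ f : Fin K → Z, w f * g f) := jensen
    _ = Real.log (∑ z, p z) := by rw [hmean]
end

section
/- (Barber–Agakov / InfoMax bound) For jointly distributed finite random variables (x,z) with joint pmf p(x,z) and any conditional pmf q(x|z) with q(x|z) > 0 whenever p(x,z) > 0, the mutual information satisfies I(x;z) ≥ H(x) + E_{(x,z)∼p}[ln q(x|z)]. -/
/-- Barber–Agakov / InfoMax bound: I(x;z) ≥ H(x) + E_{(x,z)∼p}[ln q(x|z)]. -/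
theorem barber_agakov_bound {X Z : Type*} [Fintype X] [Fintype Z]
    (p : X → Z → ℝ) (q : Z → X → ℝ)
    (hp0 : ∀ x z, 0 ≤ p x z) (hp1 : ∑ x, ∑ z, p x z = 1)
    (hq0 : ∀ z x, 0 ≤ q z x) (hq1 : ∀ z, ∑ x, q z x = 1)
    (hqp : ∀ x z, 0 < p x z → 0 < q z x) :
    (-∑ x, (∑ z, p x z) * Real.log (∑ z, p x z)) +
        (∑ x, ∑ z, p x z * Real.log (q z x))
      ≤ ∑ x, ∑ z, p x z *
          Real.log (p x z / ((∑ z', p x z') * (∑ x', p x' z))) := by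
  have key : ∀ x z, p x z * Real.log (q z x)
      - p x z * Real.log (p x z / ((∑ z', p x z') * (∑ x', p x' z)))
      - p x z * Real.log (∑ z', p x z')
      ≤ q z x * (∑ x', p x' z) - p x z := by
    intro x z
    rcases eq_or_lt_of_le (hp0 x z) with h | h
    · rw [← h]
      have : 0 ≤ q z x * (∑ x', p x' z) :=
        mul_nonneg (hq0 z x) (Finset.sum_nonneg fun x' _ => hp0 x' z)
      simpa using this
    · have hq : 0 < q z x := hqp x z h
      have hX : 0 < (∑ z', p x z') :=
        lt_of_lt_of_le h (Finset.single_le_sum (fun z' _ => hp0 x z') (Finset.mem_univ z))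
      have hZ : 0 < (∑ x', p x' z) :=
        lt_of_lt_of_le h (Finset.single_le_sum (fun x' _ => hp0 x' z) (Finset.mem_univ x))
      have hlog : Real.log (q z x * (∑ x', p x' z) / p x z)
          ≤ q z x * (∑ x', p x' z) / p x z - 1 :=
        Real.log_le_sub_one_of_pos (by positivity)
      have e1 : Real.log (p x z / ((∑ z', p x z') * (∑ x', p x' z)))
          = Real.log (p x z) - Real.log (∑ z', p x z') - Real.log (∑ x', p x' z) := by
        rw [Real.log_div h.ne' (by positivity), Real.log_mul hX.ne' hZ.ne']; ring
      have e2 : Real.log (q z x * (∑ x', p x' z) / p x z)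
          = Real.log (q z x) + Real.log (∑ x', p x' z) - Real.log (p x z) := by
        rw [Real.log_div (by positivity) h.ne', Real.log_mul hq.ne' hZ.ne']
      have h3 := mul_le_mul_of_nonneg_left hlog (le_of_lt h)
      rw [e2] at h3
      have h4 : p x z * (q z x * (∑ x', p x' z) / p x z - 1)
          = q z x * (∑ x', p x' z) - p x z := by
        field_simp
      rw [h4] at h3
      rw [e1]
      nlinarith [h3]
  have hsum : ∑ x, ∑ z, (p x z * Real.log (q z x)
      - p x z * Real.log (p x z / ((∑ z', p x z') * (∑ x', p x' z)))
      - p x z * Real.log (∑ z', p x z'))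
      ≤ ∑ x, ∑ z, (q z x * (∑ x', p x' z) - p x z) :=
    Finset.sum_le_sum fun x _ => Finset.sum_le_sum fun z _ => key x z
  have hr : ∑ x, ∑ z, (q z x * (∑ x', p x' z) - p x z) = 0 := by
    rw [Finset.sum_comm]
    have : ∀ z, ∑ x, (q z x * (∑ x', p x' z) - p x z)
        = (∑ x', p x' z) - ∑ x, p x z := by
      intro z
      rw [Finset.sum_sub_distrib, ← Finset.sum_mul, hq1 z, one_mul]
    simp only [this]
    rw [Finset.sum_sub_distrib]
    simp
  have hl : ∑ x, ∑ z, (p x z * Real.log (q z x)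
      - p x z * Real.log (p x z / ((∑ z', p x z') * (∑ x', p x' z)))
      - p x z * Real.log (∑ z', p x z'))
      = (∑ x, ∑ z, p x z * Real.log (q z x))
      - (∑ x, ∑ z, p x z * Real.log (p x z / ((∑ z', p x z') * (∑ x', p x' z))))
      - (∑ x, (∑ z, p x z) * Real.log (∑ z, p x z)) := by
    simp only [Finset.sum_sub_distrib]
    congr 1
    exact Finset.sum_congr rfl fun x _ => by rw [Finset.sum_mul]
  rw [hl, hr] at hsum
  linarith
end
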